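/- arXiv:2505.05899 — 7 statements merged into one kernel-verified Lean document; each statement's English description precedes it below -/
import Mathlib

section
/- Let H be a real Hilbert space and let {C_n} and C_0 be nonempty closed convex subsets of H such that C_n Mosco-converges to C_0. Then for every f ∈ H, the projections u_n(f) = proj_{C_n}(f) converge strongly to u_0(f) = proj_{C_0}(f), i.e. ‖u_n(f) − u_0(f)‖ → 0. -/
open Filter Topology RealInnerProductSpace

/-!
Let `v n ∈ C n` be a recovery sequence for `u0` given by (M2). Testing the variational
inequality of `u n` with `v n` gives
`‖u n - u0‖² ≤ ‖v n - f‖ * ‖v n - u0‖ + ⟪f - u0, u n - u0⟫`,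
and shows that `(u n)` is bounded. The first term tends to `0`. Along any subsequence, a further
subsequence converges weakly to some `z`, which lies in `C0` by (M1); there the second term tends
to `⟪f - u0, z - u0⟫ ≤ 0` by the variational inequality of `u0`. Hence every subsequence of
`‖u n - u0‖` has a further subsequence tending to `0`.
-/

theorem exists_subseq_weak_tendsto_of_separable
    {E : Type*} [NormedAddCommGroup E] [InnerProductSpace ℝ E] [CompleteSpace E]
    [TopologicalSpace.SeparableSpace E] {u : ℕ → E} {R : ℝ} (hR : ∀ n, ‖u n‖ ≤ R) :
    ∃ φ : ℕ → ℕ, StrictMono φ ∧ ∃ z : E,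
      ∀ w : E, Tendsto (fun i => ⟪u (φ i), w⟫) atTop (𝓝 ⟪z, w⟫) := by
  let ℓ : ℕ → WeakDual ℝ E := fun n => StrongDual.toWeakDual (InnerProductSpace.toDual ℝ E (u n))
  have hℓ : ∀ n, ℓ n ∈ WeakDual.toStrongDual ⁻¹' Metric.closedBall 0 R := by
    intro n; simpa [ℓ] using hR n
  obtain ⟨x, -, φ, hφ, hx⟩ := WeakDual.isSeqCompact_closedBall ℝ E 0 R hℓ
  refine ⟨φ, hφ, (InnerProductSpace.toDual ℝ E).symm (WeakDual.toStrongDual x), fun w => ?_⟩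
  simpa [ℓ, Function.comp_def] using ((WeakDual.eval_continuous w).tendsto x).comp hx

theorem exists_subseq_weak_tendsto_of_bounded
    {H : Type*} [NormedAddCommGroup H] [InnerProductSpace ℝ H] [CompleteSpace H]
    {u : ℕ → H} {R : ℝ} (hR : ∀ n, ‖u n‖ ≤ R) :
    ∃ φ : ℕ → ℕ, StrictMono φ ∧ ∃ z : H,
      ∀ w : H, Tendsto (fun i => ⟪u (φ i), w⟫) atTop (𝓝 ⟪z, w⟫) := by
  -- Sequential Banach–Alaoglu needs separability: pass to the closed span of the sequence.
  set K : Submodule ℝ H := (Submodule.span ℝ (Set.range u)).topologicalClosure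
  have : CompleteSpace K := (Submodule.isClosed_topologicalClosure _).completeSpace_coe
  have : TopologicalSpace.SeparableSpace K :=
    (Set.countable_range u).isSeparable.span.closure.separableSpace
  have huK : ∀ n, u n ∈ K :=
    fun n => Submodule.le_topologicalClosure _ (Submodule.subset_span ⟨n, rfl⟩)
  obtain ⟨φ, hφ, z, hz⟩ :=
    exists_subseq_weak_tendsto_of_separable (u := fun n => (⟨u n, huK n⟩ : K)) (R := R) hR
  refine ⟨φ, hφ, z, fun w => ?_⟩
  simpa using hz (K.orthogonalProjectionOnto w)

theorem tendsto_zero_of_sq_le {ι : Type*} {l : Filter ι} {x a : ι → ℝ} {c : ℝ}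
    (ha : Tendsto a l (𝓝 c)) (hc : c ≤ 0) (h : ∀ i, x i ^ 2 ≤ a i) :
    Tendsto x l (𝓝 0) := by
  have hmax : Tendsto (fun i => √(max (a i) 0)) l (𝓝 0) := by
    simpa [max_eq_right hc] using (ha.max (tendsto_const_nhds (x := (0 : ℝ)))).sqrt
  exact squeeze_zero_norm (fun i => Real.abs_le_sqrt ((h i).trans (le_max_left _ _))) hmax

section VariationalInequality

variable {H : Type*} [NormedAddCommGroup H] [InnerProductSpace ℝ H] {f u v : H}

theorem norm_sub_le_of_inner_sub_nonneg (h : 0 ≤ ⟪u - f, v - u⟫) : ‖u - f‖ ≤ ‖v - f‖ := by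
  have hv : v - f = (v - u) + (u - f) := by abel
  refine le_of_sq_le_sq ?_ (norm_nonneg _)
  rw [hv, norm_add_sq_real, real_inner_comm]
  nlinarith [sq_nonneg ‖v - u‖]

theorem sq_norm_sub_le_of_inner_sub_nonneg (h : 0 ≤ ⟪u - f, v - u⟫) (w : H) :
    ‖u - w‖ ^ 2 ≤ ‖v - f‖ * ‖v - w‖ + ⟪f - w, u - w⟫ := by
  have hsplit : ‖u - w‖ ^ 2 = ⟪u - f, u - w⟫ + ⟪f - w, u - w⟫ := by
    rw [← inner_add_left, sub_add_sub_cancel, real_inner_self_eq_norm_sq]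
  have hvi : ⟪u - f, u - w⟫ ≤ ⟪u - f, v - w⟫ := by
    rw [← sub_add_sub_cancel v u w, inner_add_right]
    linarith
  have hcs : ⟪u - f, v - w⟫ ≤ ‖v - f‖ * ‖v - w‖ :=
    (real_inner_le_norm _ _).trans
      (mul_le_mul_of_nonneg_right (norm_sub_le_of_inner_sub_nonneg h) (norm_nonneg _))
  linarith

end VariationalInequality

theorem proj_strong_convergence_of_mosco_general
    {H : Type*} [NormedAddCommGroup H] [InnerProductSpace ℝ H] [CompleteSpace H]
    (C : ℕ → Set H) (C0 : Set H)
    -- (M1): weak limits of subsequences of elements of the `C n` belong to `C0`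
    (M1 : ∀ φ : ℕ → ℕ, StrictMono φ → ∀ (v : ℕ → H) (v0 : H),
      (∀ i, v i ∈ C (φ i)) →
      (∀ w : H, Tendsto (fun i => ⟪v i, w⟫) atTop (𝓝 ⟪v0, w⟫)) → v0 ∈ C0)
    -- (M2): every point of `C0` has a strongly convergent recovery sequence
    (M2 : ∀ v0 ∈ C0, ∃ v : ℕ → H, (∀ n, v n ∈ C n) ∧
      Tendsto (fun n => ‖v n - v0‖) atTop (𝓝 0))
    (f : H) (u : ℕ → H) (u0 : H)
    (hu : ∀ n, u n ∈ C n) (hproj : ∀ n, ∀ v ∈ C n, 0 ≤ ⟪u n - f, v - u n⟫)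
    (hu0 : u0 ∈ C0) (hproj0 : ∀ v ∈ C0, 0 ≤ ⟪u0 - f, v - u0⟫) :
    Tendsto (fun n => ‖u n - u0‖) atTop (𝓝 0) := by
  obtain ⟨v, hv, hvu0⟩ := M2 u0 hu0
  have hvf : Tendsto (fun n => ‖v n - f‖) atTop (𝓝 ‖u0 - f‖) :=
    ((tendsto_iff_norm_sub_tendsto_zero.2 hvu0).sub_const f).norm
  obtain ⟨B, hB⟩ := hvf.bddAbove_range
  have hvi : ∀ n, 0 ≤ ⟪u n - f, v n - u n⟫ := fun n => hproj n _ (hv n)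
  have hbdd : ∀ n, ‖u n‖ ≤ ‖f‖ + B := fun n =>
    (norm_le_norm_add_norm_sub' _ f).trans
      (add_le_add_right ((norm_sub_le_of_inner_sub_nonneg (hvi n)).trans (hB ⟨n, rfl⟩)) _)
  refine tendsto_of_subseq_tendsto fun ns hns => ?_
  obtain ⟨ms, -, hmono⟩ := strictMono_subseq_of_tendsto_atTop hns
  obtain ⟨ks, hks, z, hz⟩ := exists_subseq_weak_tendsto_of_bounded fun i => hbdd (ns (ms i))
  have hzC0 : z ∈ C0 := M1 _ (hmono.comp hks) _ z (fun i => hu _) hz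
  have hψ : Tendsto (fun i => ns (ms (ks i))) atTop atTop := (hmono.comp hks).tendsto_atTop
  have hlin : Tendsto (fun i => ⟪f - u0, u (ns (ms (ks i))) - u0⟫) atTop (𝓝 ⟪f - u0, z - u0⟫) := by
    simpa only [inner_sub_right, real_inner_comm (f - u0)] using
      (hz (f - u0)).sub_const ⟪f - u0, u0⟫
  have hrec := (hvf.comp hψ).mul (hvu0.comp hψ)
  rw [mul_zero] at hrec
  refine ⟨ms ∘ ks, tendsto_zero_of_sq_le (by simpa using hrec.add hlin) ?_
    fun i => sq_norm_sub_le_of_inner_sub_nonneg (hvi (ns (ms (ks i)))) u0⟩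
  rw [← neg_sub, inner_neg_left, neg_nonpos]
  exact hproj0 z hzC0

/-- Mosco convergence of nonempty closed convex sets `C n → C 0` in a real Hilbert space
implies strong convergence of the metric projections `proj_{C n}(f) → proj_{C 0}(f)` for
every `f`.  The projections are characterized by their variational inequalities. -/
theorem proj_strong_convergence_of_mosco
    {H : Type*} [NormedAddCommGroup H] [InnerProductSpace ℝ H] [CompleteSpace H]
    (C : ℕ → Set H) (C0 : Set H)
    (hne : ∀ n, (C n).Nonempty) (hcl : ∀ n, IsClosed (C n)) (hcv : ∀ n, Convex ℝ (C n))
    (hne0 : C0.Nonempty) (hcl0 : IsClosed C0) (hcv0 : Convex ℝ C0)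
    -- (M1): weak limits of subsequences of elements of the `C n` belong to `C0`
    (M1 : ∀ φ : ℕ → ℕ, StrictMono φ → ∀ (v : ℕ → H) (v0 : H),
      (∀ i, v i ∈ C (φ i)) →
      (∀ w : H, Tendsto (fun i => ⟪v i, w⟫) atTop (𝓝 ⟪v0, w⟫)) → v0 ∈ C0)
    -- (M2): every point of `C0` has a strongly convergent recovery sequence
    (M2 : ∀ v0 ∈ C0, ∃ v : ℕ → H, (∀ n, v n ∈ C n) ∧
      Tendsto (fun n => ‖v n - v0‖) atTop (𝓝 0))
    (f : H) (u : ℕ → H) (u0 : H)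
    (hu : ∀ n, u n ∈ C n) (hproj : ∀ n, ∀ v ∈ C n, 0 ≤ ⟪u n - f, v - u n⟫)
    (hu0 : u0 ∈ C0) (hproj0 : ∀ v ∈ C0, 0 ≤ ⟪u0 - f, v - u0⟫) :
    Tendsto (fun n => ‖u n - u0‖) atTop (𝓝 0) :=
  proj_strong_convergence_of_mosco_general C C0 M1 M2 f u u0 hu hproj hu0 hproj0
end

section
/- Let H be a real Hilbert space and let {C_n} and C_0 be nonempty closed convex subsets of H. Assume that for every f ∈ H the projections proj_{C_n}(f) converge strongly to proj_{C_0}(f). Then C_n Mosco-converges to C_0, i.e. both: (M1) whenever a sequence w_{n_i} ∈ C_{n_i} converges weakly to some w_0 ∈ H, then w_0 ∈ C_0; and (M2) for every w_0 ∈ C_0 there exist w_n ∈ C_n with ‖w_n − w_0‖ → 0. -/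
open Filter Topology RealInnerProductSpace

lemma exists_proj' {H : Type*} [NormedAddCommGroup H] [InnerProductSpace ℝ H] [CompleteSpace H]
    {K : Set H} (hne : K.Nonempty) (hcl : IsClosed K) (hcv : Convex ℝ K) (f : H) :
    ∃ u ∈ K, ∀ v ∈ K, 0 ≤ ⟪u - f, v - u⟫ := by
  obtain ⟨u, hu, hmin⟩ := exists_norm_eq_iInf_of_complete_convex hne hcl.isComplete hcv f
  refine ⟨u, hu, fun v hv => ?_⟩
  have h2 : ⟪f - u, v - u⟫ ≤ 0 :=
    (norm_eq_iInf_iff_real_inner_le_zero hcv hu).mp hmin v hv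
  have : u - f = -(f - u) := by abel
  rw [this, inner_neg_left]
  linarith


/-- If, for every `f ∈ H`, the metric projections `proj_{C n}(f)` (characterized by their
variational inequalities) converge strongly to `proj_{C 0}(f)`, then `C n` Mosco-converges
to `C 0`: (M1) weak limits of subsequences of elements of the `C n` lie in `C0`, and
(M2) every point of `C0` has a strongly convergent recovery sequence. -/
theorem mosco_of_proj_strong_convergence
    {H : Type*} [NormedAddCommGroup H] [InnerProductSpace ℝ H] [CompleteSpace H]
    (C : ℕ → Set H) (C0 : Set H)
    (hne : ∀ n, (C n).Nonempty) (hcl : ∀ n, IsClosed (C n)) (hcv : ∀ n, Convex ℝ (C n))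
    (hne0 : C0.Nonempty) (hcl0 : IsClosed C0) (hcv0 : Convex ℝ C0)
    (Hproj : ∀ (f : H) (u : ℕ → H) (u0 : H),
      (∀ n, u n ∈ C n) → (∀ n, ∀ v ∈ C n, 0 ≤ ⟪u n - f, v - u n⟫) →
      u0 ∈ C0 → (∀ v ∈ C0, 0 ≤ ⟪u0 - f, v - u0⟫) →
      Tendsto (fun n => ‖u n - u0‖) atTop (𝓝 0)) :
    (∀ φ : ℕ → ℕ, StrictMono φ → ∀ (w : ℕ → H) (w0 : H),
      (∀ i, w i ∈ C (φ i)) →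
      (∀ ψ : H, Tendsto (fun i => ⟪w i, ψ⟫) atTop (𝓝 ⟪w0, ψ⟫)) → w0 ∈ C0) ∧
    (∀ w0 ∈ C0, ∃ w : ℕ → H, (∀ n, w n ∈ C n) ∧
      Tendsto (fun n => ‖w n - w0‖) atTop (𝓝 0)) := by
  constructor
  · intro φ hφ w w0 hw hweak
    -- projections of w0
    choose u hu hvar using fun n => exists_proj' (hne n) (hcl n) (hcv n) w0
    obtain ⟨u0, hu0, hvar0⟩ := exists_proj' hne0 hcl0 hcv0 w0
    have hconv : Tendsto (fun n => ‖u n - u0‖) atTop (𝓝 0) :=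
      Hproj w0 u u0 hu hvar hu0 hvar0
    have hstrong : Tendsto u atTop (𝓝 u0) :=
      tendsto_iff_norm_sub_tendsto_zero.mpr hconv
    have hsub : Tendsto (fun i => u (φ i)) atTop (𝓝 u0) :=
      hstrong.comp hφ.tendsto_atTop
    have hsubnorm : Tendsto (fun i => ‖u (φ i) - u0‖) atTop (𝓝 0) :=
      hconv.comp hφ.tendsto_atTop
    -- boundedness of w by Banach-Steinhaus
    have hbdd : ∃ M : ℝ, ∀ i, ‖w i‖ ≤ M := by
      have hpt : ∀ x : H, ∃ Cx : ℝ, ∀ i, ‖(innerSL ℝ (w i)) x‖ ≤ Cx := by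
        intro x
        have := (hweak x).norm
        obtain ⟨Cx, hCx⟩ := this.bddAbove_range
        exact ⟨Cx, fun i => hCx ⟨i, rfl⟩⟩
      obtain ⟨M, hM⟩ := banach_steinhaus hpt
      exact ⟨M, fun i => by simpa [innerSL_apply_norm] using hM i⟩
    obtain ⟨M, hM⟩ := hbdd
    -- limit of the variational inequality
    have hterm : Tendsto (fun i => ⟪u (φ i) - w0, w i - u (φ i)⟫)
        atTop (𝓝 ⟪u0 - w0, w0 - u0⟫) := by
      have h1 : Tendsto (fun i => ⟪u (φ i) - u0, w i⟫) atTop (𝓝 0) := by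
        have hb : ∀ i, |⟪u (φ i) - u0, w i⟫| ≤ ‖u (φ i) - u0‖ * M := by
          intro i
          calc |⟪u (φ i) - u0, w i⟫| ≤ ‖u (φ i) - u0‖ * ‖w i‖ := abs_real_inner_le_norm _ _
            _ ≤ ‖u (φ i) - u0‖ * M := by
                have := hM i
                nlinarith [norm_nonneg (u (φ i) - u0), norm_nonneg (w i)]
        have hlim : Tendsto (fun i => ‖u (φ i) - u0‖ * M) atTop (𝓝 0) := by
          simpa using hsubnorm.mul_const M
        exact squeeze_zero_norm (f := fun i => ⟪u (φ i) - u0, w i⟫)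
          (fun i => by simpa [Real.norm_eq_abs] using hb i) hlim
      have h2 : Tendsto (fun i => ⟪u0 - w0, w i⟫) atTop (𝓝 ⟪u0 - w0, w0⟫) := by
        have := hweak (u0 - w0)
        simpa [real_inner_comm] using this
      have h3 : Tendsto (fun i => ⟪u (φ i) - w0, w i⟫) atTop (𝓝 ⟪u0 - w0, w0⟫) := by
        have := h1.add h2
        simp only [add_zero, zero_add] at this
        convert this using 2 with i
        rw [← inner_add_left]
        congr 1
        abel
      have h4 : Tendsto (fun i => ⟪u (φ i) - w0, u (φ i)⟫) atTop (𝓝 ⟪u0 - w0, u0⟫) := by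
        have hc : Continuous fun p : H × H => ⟪p.1 - w0, p.2⟫ := by
          exact (continuous_fst.sub continuous_const).inner continuous_snd
        exact (hc.tendsto (u0, u0)).comp (hsub.prodMk_nhds hsub)
      have := h3.sub h4
      convert this using 2 with i
      · rw [inner_sub_right]
      · rw [inner_sub_right]
    have hpos : 0 ≤ ⟪u0 - w0, w0 - u0⟫ :=
      ge_of_tendsto' hterm fun i => hvar (φ i) (w i) (hw i)
    have : w0 - u0 = -(u0 - w0) := by abel
    rw [this, inner_neg_right, real_inner_self_eq_norm_sq] at hpos
    have hz : ‖u0 - w0‖ = 0 := by nlinarith [norm_nonneg (u0 - w0)]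
    have : u0 = w0 := by
      have := norm_sub_eq_zero_iff.mp hz
      exact this
    rwa [← this]
  · intro w0 hw0
    choose w hw hvar using fun n => exists_proj' (hne n) (hcl n) (hcv n) w0
    refine ⟨w, hw, ?_⟩
    exact Hproj w0 w w0 hw hvar hw0 (fun v hv => by simp)
end

section
/- Let H be a real Hilbert space and let {C_n} and C_0 be nonempty closed convex subsets of H such that C_n Mosco-converges to C_0. Then for every f ∈ H, the whole sequence of projections u_n = proj_{C_n}(f) converges weakly in H to u_0 = proj_{C_0}(f). -/
open Filter Topology RealInnerProductSpace

/-- Weak sequential compactness of bounded sequences in a real Hilbert space. -/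
lemma weak_seq_compact_aux
    {H : Type*} [NormedAddCommGroup H] [InnerProductSpace ℝ H] [CompleteSpace H]
    (u : ℕ → H) (R : ℝ) (hR : ∀ n, ‖u n‖ ≤ R) :
    ∃ ψ : ℕ → ℕ, StrictMono ψ ∧ ∃ w : H,
      ∀ x : H, Tendsto (fun k => ⟪u (ψ k), x⟫) atTop (𝓝 ⟪w, x⟫) := by
  have hR0 : 0 ≤ R := le_trans (norm_nonneg _) (hR 0)
  -- extract a subsequence along which all ⟪u n, u m⟫ converge
  have hs : IsCompact (Set.pi Set.univ fun _ : ℕ => Set.Icc (-(R*R)) (R*R)) :=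
    isCompact_univ_pi fun _ => isCompact_Icc
  have hmem : ∀ n, (fun m => (⟪u n, u m⟫ : ℝ)) ∈
      (Set.pi Set.univ fun _ : ℕ => Set.Icc (-(R*R)) (R*R)) := by
    intro n m _
    have h1 := abs_real_inner_le_norm (u n) (u m)
    have h2 : ‖u n‖ * ‖u m‖ ≤ R * R :=
      mul_le_mul (hR n) (hR m) (norm_nonneg _) hR0
    exact Set.mem_Icc.mpr (abs_le.mp (h1.trans h2))
  obtain ⟨a, -, ψ, hψ, hconv⟩ := hs.tendsto_subseq hmem
  refine ⟨ψ, hψ, ?_⟩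
  have hptconv : ∀ m, Tendsto (fun k => (⟪u (ψ k), u m⟫ : ℝ)) atTop (𝓝 (a m)) := by
    intro m
    exact (tendsto_pi_nhds.mp hconv) m
  -- the set of x for which ⟪u (ψ k), x⟫ converges
  set P : H → Prop := fun x => ∃ c : ℝ, Tendsto (fun k => ⟪u (ψ k), x⟫) atTop (𝓝 c) with hPdef
  have hPadd : ∀ x y, P x → P y → P (x + y) := by
    rintro x y ⟨c, hc⟩ ⟨d, hd⟩
    exact ⟨c + d, by simpa only [inner_add_right] using hc.add hd⟩
  have hPspan : ∀ x ∈ Submodule.span ℝ (Set.range u), P x := by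
    intro x hx
    induction hx using Submodule.span_induction with
    | mem x hx => obtain ⟨m, rfl⟩ := hx; exact ⟨a m, hptconv m⟩
    | zero => exact ⟨0, by simpa using (tendsto_const_nhds : Tendsto (fun _ : ℕ => (0:ℝ)) atTop _)⟩
    | add x y _ _ hx hy => exact hPadd x y hx hy
    | smul r x _ hx =>
      obtain ⟨c, hc⟩ := hx
      exact ⟨r * c, by simpa only [real_inner_smul_right] using hc.const_mul r⟩
  -- closed under limits, by a Cauchy estimate
  have hPclos : ∀ x ∈ closure ((Submodule.span ℝ (Set.range u) : Submodule ℝ H) : Set H), P x := by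
    intro x hx
    have cauchy : CauchySeq (fun k => (⟪u (ψ k), x⟫ : ℝ)) := by
      rw [Metric.cauchySeq_iff]
      intro ε hε
      obtain ⟨y, hy, hxy⟩ := Metric.mem_closure_iff.mp hx (ε / (2 * (2 * R + 1)))
        (by positivity)
      obtain ⟨c, hc⟩ := hPspan y hy
      obtain ⟨N, hN⟩ := Metric.cauchySeq_iff.mp hc.cauchySeq (ε / 2) (by positivity)
      refine ⟨N, fun m hm n hn => ?_⟩
      have key : ∀ k, |(⟪u (ψ k), x⟫ : ℝ) - ⟪u (ψ k), y⟫| ≤ ε / 4 := by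
        intro k
        have heq : (⟪u (ψ k), x⟫ : ℝ) - ⟪u (ψ k), y⟫ = ⟪u (ψ k), x - y⟫ := by
          rw [inner_sub_right]
        rw [heq]
        have h1 := abs_real_inner_le_norm (u (ψ k)) (x - y)
        have h2 : ‖x - y‖ ≤ ε / (2 * (2 * R + 1)) := by
          rw [← dist_eq_norm]
          exact hxy.le
        have h3 : |(⟪u (ψ k), x - y⟫ : ℝ)| ≤ R * (ε / (2 * (2 * R + 1))) :=
          h1.trans (mul_le_mul (hR _) h2 (norm_nonneg _) hR0)
        refine h3.trans ?_
        rw [mul_div_assoc', div_le_div_iff₀ (by positivity) (by norm_num : (0:ℝ) < 4)]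
        nlinarith [hε.le, hR0]
      have hd := hN m hm n hn
      rw [Real.dist_eq] at hd ⊢
      have t1 := abs_sub_le (⟪u (ψ m), x⟫ : ℝ) ⟪u (ψ m), y⟫ ⟪u (ψ n), x⟫
      have t2 := abs_sub_le (⟪u (ψ m), y⟫ : ℝ) ⟪u (ψ n), y⟫ ⟪u (ψ n), x⟫
      have h4 : |(⟪u (ψ n), y⟫ : ℝ) - ⟪u (ψ n), x⟫| ≤ ε / 4 := by
        rw [abs_sub_comm]; exact key n
      linarith [key m, h4]
    obtain ⟨c, hc⟩ := cauchySeq_tendsto_of_complete cauchy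
    exact ⟨c, hc⟩
  -- decomposition into the closed span and its orthogonal complement
  set K : Submodule ℝ H := (Submodule.span ℝ (Set.range u)).topologicalClosure with hKdef
  have hPK : ∀ x ∈ K, P x := by
    intro x hx
    exact hPclos x hx
  have hPKorth : ∀ x ∈ Kᗮ, P x := by
    intro x hx
    refine ⟨0, ?_⟩
    have hz : ∀ k, (⟪u (ψ k), x⟫ : ℝ) = 0 := by
      intro k
      have hmemK : u (ψ k) ∈ K :=
        Submodule.le_topologicalClosure _ (Submodule.subset_span (Set.mem_range_self _))
      exact (Submodule.mem_orthogonal K x).mp hx _ hmemK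
    simpa [hz] using (tendsto_const_nhds : Tendsto (fun _ : ℕ => (0:ℝ)) atTop _)
  have hPall : ∀ x : H, P x := by
    intro x
    haveI : CompleteSpace K :=
      (Submodule.span ℝ (Set.range u)).isClosed_topologicalClosure.completeSpace_coe
    obtain ⟨y, hy, z, hz, rfl⟩ := K.exists_add_mem_mem_orthogonal x
    exact hPadd y z (hPK y hy) (hPKorth z hz)
  -- build the weak limit via Riesz representation
  choose L hL using hPall
  have hLadd : ∀ x y, L (x + y) = L x + L y := by
    intro x y
    refine tendsto_nhds_unique (hL (x + y)) ?_
    simpa only [inner_add_right] using (hL x).add (hL y)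
  have hLsmul : ∀ (r : ℝ) x, L (r • x) = r * L x := by
    intro r x
    refine tendsto_nhds_unique (hL (r • x)) ?_
    simpa only [real_inner_smul_right] using (hL x).const_mul r
  have hLbound : ∀ x, ‖L x‖ ≤ R * ‖x‖ := by
    intro x
    rw [Real.norm_eq_abs]
    refine le_of_tendsto (hL x).abs (Eventually.of_forall fun k => ?_)
    exact (abs_real_inner_le_norm _ _).trans
      (mul_le_mul_of_nonneg_right (hR _) (norm_nonneg _))
  let lin : H →ₗ[ℝ] ℝ :=
    { toFun := L, map_add' := hLadd, map_smul' := hLsmul }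
  let Lc : H →L[ℝ] ℝ := lin.mkContinuous R hLbound
  refine ⟨(InnerProductSpace.toDual ℝ H).symm Lc, fun x => ?_⟩
  have : (⟪(InnerProductSpace.toDual ℝ H).symm Lc, x⟫ : ℝ) = Lc x :=
    InnerProductSpace.toDual_symm_apply
  rw [this]
  exact hL x

/-- Under Mosco convergence `C n → C0` of nonempty closed convex sets, for every `f`
the whole sequence of projections `u n = proj_{C n}(f)` converges weakly to
`u0 = proj_{C0}(f)`. -/
theorem proj_weak_convergence_of_mosco
    {H : Type*} [NormedAddCommGroup H] [InnerProductSpace ℝ H] [CompleteSpace H]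
    (C : ℕ → Set H) (C0 : Set H)
    (hne : ∀ n, (C n).Nonempty) (hcl : ∀ n, IsClosed (C n)) (hcv : ∀ n, Convex ℝ (C n))
    (hne0 : C0.Nonempty) (hcl0 : IsClosed C0) (hcv0 : Convex ℝ C0)
    (M1 : ∀ φ : ℕ → ℕ, StrictMono φ → ∀ (v : ℕ → H) (v0 : H),
      (∀ i, v i ∈ C (φ i)) →
      (∀ w : H, Tendsto (fun i => ⟪v i, w⟫) atTop (𝓝 ⟪v0, w⟫)) → v0 ∈ C0)
    (M2 : ∀ v0 ∈ C0, ∃ v : ℕ → H, (∀ n, v n ∈ C n) ∧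
      Tendsto (fun n => ‖v n - v0‖) atTop (𝓝 0))
    (f : H) (u : ℕ → H) (u0 : H)
    (hu : ∀ n, u n ∈ C n) (hproj : ∀ n, ∀ v ∈ C n, 0 ≤ ⟪u n - f, v - u n⟫)
    (hu0 : u0 ∈ C0) (hproj0 : ∀ v ∈ C0, 0 ≤ ⟪u0 - f, v - u0⟫) :
    ∀ φ : H, Tendsto (fun n => ⟪u n, φ⟫) atTop (𝓝 ⟪u0, φ⟫) := by
  -- a strongly convergent approximating sequence of `u0`
  obtain ⟨v, hv, hvlim⟩ := M2 u0 hu0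
  -- `u` is bounded
  obtain ⟨B, hB⟩ := hvlim.bddAbove_range
  have hB' : ∀ n, ‖v n - u0‖ ≤ B := fun n => hB (Set.mem_range_self n)
  have hunf : ∀ n, ‖u n - f‖ ≤ ‖v n - f‖ := by
    intro n
    have h0 := hproj n (v n) (hv n)
    have hexp : (⟪u n - f, v n - u n⟫ : ℝ)
        = ⟪u n - f, v n - f⟫ - ‖u n - f‖ ^ 2 := by
      have : v n - u n = (v n - f) - (u n - f) := by abel
      rw [this, inner_sub_right, real_inner_self_eq_norm_sq]
    have h1 : ‖u n - f‖ ^ 2 ≤ (⟪u n - f, v n - f⟫ : ℝ) := by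
      rw [hexp] at h0; linarith
    have h2 : (⟪u n - f, v n - f⟫ : ℝ) ≤ ‖u n - f‖ * ‖v n - f‖ :=
      real_inner_le_norm _ _
    nlinarith [norm_nonneg (u n - f), norm_nonneg (v n - f)]
  set R : ℝ := B + ‖u0 - f‖ + ‖f‖ with hRdef
  have hub : ∀ n, ‖u n‖ ≤ R := by
    intro n
    have h1 : ‖u n‖ ≤ ‖u n - f‖ + ‖f‖ := by
      simpa using norm_add_le (u n - f) f
    have h2 : ‖v n - f‖ ≤ ‖v n - u0‖ + ‖u0 - f‖ := by
      simpa using norm_add_le (v n - u0) (u0 - f)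
    have := hunf n
    have := hB' n
    simp only [hRdef]
    linarith
  intro φt
  apply tendsto_of_subseq_tendsto
  intro ns hns
  obtain ⟨g, hg, hnsg⟩ := strictMono_subseq_of_tendsto_atTop hns
  obtain ⟨ψ, hψ, w, hw⟩ := weak_seq_compact_aux (fun k => u (ns (g k))) R (fun k => hub _)
  set σ : ℕ → ℕ := fun k => ns (g (ψ k)) with hσdef
  have hσmono : StrictMono σ := fun a b hab => hnsg (hψ hab)
  have hw' : ∀ x : H, Tendsto (fun k => (⟪u (σ k), x⟫ : ℝ)) atTop (𝓝 ⟪w, x⟫) := hw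
  -- weak limit lies in C0
  have hwC0 : w ∈ C0 := M1 σ hσmono (fun k => u (σ k)) w (fun k => hu _) hw'
  -- pass to the limit in the variational inequality
  have hvσ : Tendsto (fun k => ‖v (σ k) - u0‖) atTop (𝓝 0) :=
    hvlim.comp hσmono.tendsto_atTop
  have term1 : Tendsto (fun k => (⟪u (σ k) - f, v (σ k) - u0⟫ : ℝ)) atTop (𝓝 0) := by
    refine squeeze_zero_norm (fun k => ?_) (by simpa using hvσ.const_mul (R + ‖f‖))
    ·
      have h1 := abs_real_inner_le_norm (u (σ k) - f) (v (σ k) - u0)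
      have h2 : ‖u (σ k) - f‖ ≤ R + ‖f‖ := by
        have := norm_sub_le (u (σ k)) f
        have := hub (σ k)
        linarith
      rw [Real.norm_eq_abs]
      exact h1.trans (mul_le_mul_of_nonneg_right h2 (norm_nonneg _))
  have term2 : Tendsto (fun k => (⟪u (σ k) - f, u0 - w⟫ : ℝ)) atTop
      (𝓝 (⟪w - f, u0 - w⟫ : ℝ)) := by
    have h1 : ∀ k, (⟪u (σ k) - f, u0 - w⟫ : ℝ) = ⟪u (σ k), u0 - w⟫ - ⟪f, u0 - w⟫ := by
      intro k; rw [inner_sub_left]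
    have h2 : (⟪w - f, u0 - w⟫ : ℝ) = ⟪w, u0 - w⟫ - ⟪f, u0 - w⟫ := by
      rw [inner_sub_left]
    simp only [h1, h2]
    exact (hw' (u0 - w)).sub_const _
  have term3 : Tendsto (fun k => (⟪w - f, w - u (σ k)⟫ : ℝ)) atTop (𝓝 0) := by
    have h1 : ∀ k, (⟪w - f, w - u (σ k)⟫ : ℝ) = ⟪w, w - f⟫ - ⟪u (σ k), w - f⟫ := by
      intro k
      rw [inner_sub_right, real_inner_comm (w - f) w, real_inner_comm (w - f) (u (σ k))]
    simp only [h1]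
    have := (hw' (w - f)).const_sub (⟪w, w - f⟫ : ℝ)
    simpa using this
  have hsum : Tendsto (fun k => (⟪u (σ k) - f, v (σ k) - u0⟫ : ℝ)
      + ⟪u (σ k) - f, u0 - w⟫ + ⟪w - f, w - u (σ k)⟫) atTop
      (𝓝 (⟪w - f, u0 - w⟫ : ℝ)) := by
    have := (term1.add term2).add term3
    simpa using this
  have hnonneg : ∀ k, 0 ≤ (⟪u (σ k) - f, v (σ k) - u0⟫ : ℝ)
      + ⟪u (σ k) - f, u0 - w⟫ + ⟪w - f, w - u (σ k)⟫ := by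
    intro k
    have h0 := hproj (σ k) (v (σ k)) (hv (σ k))
    set x := u (σ k)
    set vv := v (σ k)
    have e1 : (⟪x - f, vv - u0⟫ : ℝ) + ⟪x - f, u0 - w⟫ = ⟪x - f, vv - w⟫ := by
      rw [← inner_add_right]
      congr 1
      abel
    have e2 : (⟪x - f, vv - w⟫ : ℝ) = ⟪x - f, vv - x⟫ + ⟪x - f, x - w⟫ := by
      rw [← inner_add_right]
      congr 1
      abel
    have e3 : (⟪x - f, x - w⟫ : ℝ) = ⟪x - w, x - w⟫ + ⟪w - f, x - w⟫ := by
      rw [← inner_add_left]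
      congr 1
      abel
    have e4 : (⟪w - f, w - x⟫ : ℝ) = -⟪w - f, x - w⟫ := by
      rw [show (w - x : H) = -(x - w) by abel, inner_neg_right]
    have e5 : (0:ℝ) ≤ ⟪x - w, x - w⟫ := real_inner_self_nonneg
    linarith
  have hineq1 : (0:ℝ) ≤ ⟪w - f, u0 - w⟫ := ge_of_tendsto' hsum hnonneg
  have hineq2 : (0:ℝ) ≤ ⟪u0 - f, w - u0⟫ := hproj0 w hwC0
  -- uniqueness: w = u0
  have hwu0 : w = u0 := by
    have key : (⟪w - f, u0 - w⟫ : ℝ) + ⟪u0 - f, w - u0⟫ = -‖w - u0‖ ^ 2 := by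
      have e1 : (⟪u0 - f, w - u0⟫ : ℝ) = -⟪u0 - f, u0 - w⟫ := by
        rw [show (w - u0 : H) = -(u0 - w) by abel, inner_neg_right]
      have e2 : (⟪w - f, u0 - w⟫ : ℝ) - ⟪u0 - f, u0 - w⟫ = ⟪w - u0, u0 - w⟫ := by
        rw [← inner_sub_left]
        congr 1
        abel
      have e3 : (⟪w - u0, u0 - w⟫ : ℝ) = -‖w - u0‖ ^ 2 := by
        rw [show (u0 - w : H) = -(w - u0) by abel, inner_neg_right,
          real_inner_self_eq_norm_sq]
      linarith
    have h5 : ‖w - u0‖ ^ 2 ≤ 0 := by linarith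
    have h6 : ‖w - u0‖ = 0 := by
      have := sq_nonneg ‖w - u0‖
      have : ‖w - u0‖ ^ 2 = 0 := le_antisymm h5 this
      exact pow_eq_zero_iff (by norm_num) |>.mp this
    have := norm_sub_eq_zero_iff.mp h6
    exact this
  refine ⟨fun k => g (ψ k), ?_⟩
  have := hw' φt
  rw [hwu0] at this
  exact this
end

section
/- Let H be a real Hilbert space and let {C_n} and C_0 be nonempty closed convex subsets of H. Assume that for every f ∈ H the projections proj_{C_n}(f) converge strongly to proj_{C_0}(f). Then: whenever w_n ∈ C_n for each n and the sequence {w_n} converges weakly in H to a point w_0, the limit w_0 belongs to C_0. -/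
open Filter Topology RealInnerProductSpace

/-- If for every `f ∈ H` the projections `proj_{C n}(f)` converge strongly to
`proj_{C0}(f)`, then every weak limit of a sequence `w n ∈ C n` belongs to `C0`. -/
theorem weak_limit_mem_of_proj_strong_convergence
    {H : Type*} [NormedAddCommGroup H] [InnerProductSpace ℝ H] [CompleteSpace H]
    (C : ℕ → Set H) (C0 : Set H)
    (hne : ∀ n, (C n).Nonempty) (hcl : ∀ n, IsClosed (C n)) (hcv : ∀ n, Convex ℝ (C n))
    (hne0 : C0.Nonempty) (hcl0 : IsClosed C0) (hcv0 : Convex ℝ C0)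
    (Hproj : ∀ (f : H) (u : ℕ → H) (u0 : H),
      (∀ n, u n ∈ C n) → (∀ n, ∀ v ∈ C n, 0 ≤ ⟪u n - f, v - u n⟫) →
      u0 ∈ C0 → (∀ v ∈ C0, 0 ≤ ⟪u0 - f, v - u0⟫) →
      Tendsto (fun n => ‖u n - u0‖) atTop (𝓝 0))
    (w : ℕ → H) (w0 : H) (hw : ∀ n, w n ∈ C n)
    (hweak : ∀ φ : H, Tendsto (fun n => ⟪w n, φ⟫) atTop (𝓝 ⟪w0, φ⟫)) :
    w0 ∈ C0 := by
  -- construct projections of w0 onto C n and C0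
  have hproj : ∀ n, ∃ u ∈ C n, ∀ v ∈ C n, 0 ≤ ⟪u - w0, v - u⟫ := by
    intro n
    obtain ⟨u, hu, hnorm⟩ :=
      exists_norm_eq_iInf_of_complete_convex (hne n) (hcl n).isComplete (hcv n) w0
    refine ⟨u, hu, fun v hv => ?_⟩
    have := (norm_eq_iInf_iff_real_inner_le_zero (hcv n) hu).mp hnorm v hv
    have h2 : ⟪u - w0, v - u⟫ = -⟪w0 - u, v - u⟫ := by
      rw [← inner_neg_left]; congr 1; abel
    rw [h2]; linarith
  choose u hu hu' using hproj
  obtain ⟨u0, hu0, hnorm0⟩ :=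
    exists_norm_eq_iInf_of_complete_convex hne0 hcl0.isComplete hcv0 w0
  have hu0' : ∀ v ∈ C0, 0 ≤ ⟪u0 - w0, v - u0⟫ := by
    intro v hv
    have := (norm_eq_iInf_iff_real_inner_le_zero hcv0 hu0).mp hnorm0 v hv
    have h2 : ⟪u0 - w0, v - u0⟫ = -⟪w0 - u0, v - u0⟫ := by
      rw [← inner_neg_left]; congr 1; abel
    rw [h2]; linarith
  have hten : Tendsto (fun n => ‖u n - u0‖) atTop (𝓝 0) :=
    Hproj w0 u u0 hu hu' hu0 hu0'
  -- uniform boundedness of w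
  obtain ⟨M, hM⟩ : ∃ M, ∀ n, ‖w n‖ ≤ M := by
    have hb : ∀ φ : H, ∃ Cb, ∀ n, ‖(innerSL ℝ (w n)) φ‖ ≤ Cb := by
      intro φ
      obtain ⟨Cb, hCb⟩ := ((hweak φ).norm.bddAbove_range)
      exact ⟨Cb, fun n => hCb ⟨n, rfl⟩⟩
    obtain ⟨M, hM⟩ := banach_steinhaus hb
    exact ⟨M, fun n => by simpa [innerSL_apply_norm] using hM n⟩
  -- key inequality
  have key : ∀ n, ‖u n - w0‖ ^ 2 ≤ ‖u n - u0‖ * (M + ‖w0‖) + ⟪u0 - w0, w n - w0⟫ := by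
    intro n
    have h1 : 0 ≤ ⟪u n - w0, w n - u n⟫ := hu' n (w n) (hw n)
    have h2 : ‖u n - w0‖ ^ 2 ≤ ⟪u n - w0, w n - w0⟫ := by
      have := real_inner_self_eq_norm_sq (u n - w0)
      have hsplit : ⟪u n - w0, w n - w0⟫ = ⟪u n - w0, w n - u n⟫ + ⟪u n - w0, u n - w0⟫ := by
        rw [← inner_add_right]; congr 1; abel
      nlinarith [h1]
    have h3 : ⟪u n - w0, w n - w0⟫
        = ⟪u n - u0, w n - w0⟫ + ⟪u0 - w0, w n - w0⟫ := by
      rw [← inner_add_left]; congr 1; abel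
    have h4 : ⟪u n - u0, w n - w0⟫ ≤ ‖u n - u0‖ * (M + ‖w0‖) := by
      calc ⟪u n - u0, w n - w0⟫ ≤ ‖u n - u0‖ * ‖w n - w0‖ := real_inner_le_norm _ _
        _ ≤ ‖u n - u0‖ * (M + ‖w0‖) := by
            apply mul_le_mul_of_nonneg_left _ (norm_nonneg _)
            calc ‖w n - w0‖ ≤ ‖w n‖ + ‖w0‖ := norm_sub_le _ _
              _ ≤ M + ‖w0‖ := by linarith [hM n]
    linarith
  -- limits
  have hlim2 : Tendsto (fun n => ⟪u0 - w0, w n - w0⟫) atTop (𝓝 0) := by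
    have heq : ∀ n, ⟪u0 - w0, w n - w0⟫ = ⟪w n, u0 - w0⟫ - ⟪w0, u0 - w0⟫ := by
      intro n
      rw [real_inner_comm, inner_sub_left]
    simp only [heq]
    have := (hweak (u0 - w0)).sub_const ⟪w0, u0 - w0⟫
    simpa using this
  have hrhs : Tendsto (fun n => ‖u n - u0‖ * (M + ‖w0‖) + ⟪u0 - w0, w n - w0⟫)
      atTop (𝓝 0) := by
    have := (hten.mul_const (M + ‖w0‖)).add hlim2
    simpa using this
  have hun : Tendsto (fun n => u n) atTop (𝓝 u0) := by
    rw [tendsto_iff_norm_sub_tendsto_zero]; exact hten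
  have hlhs : Tendsto (fun n => ‖u n - w0‖ ^ 2) atTop (𝓝 (‖u0 - w0‖ ^ 2)) := by
    exact (((hun.sub_const w0).norm).pow 2)
  have hfinal : ‖u0 - w0‖ ^ 2 ≤ 0 := le_of_tendsto_of_tendsto' hlhs hrhs key
  have : u0 = w0 := by
    have : ‖u0 - w0‖ = 0 := by nlinarith [norm_nonneg (u0 - w0)]
    rwa [norm_sub_eq_zero_iff] at this
  rwa [← this]
end

section
/- Let H be a real Hilbert space, let {C_n} be a sequence of nonempty closed convex subsets of H, let f ∈ H, and set u_n = proj_{C_n}(f). Suppose that u_n converges weakly in H to some u_0, and that there exist z_n ∈ C_n with ‖z_n − u_0‖ → 0. Then u_n converges strongly to u_0, i.e. ‖u_n − u_0‖ → 0. -/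
open Filter Topology RealInnerProductSpace

/-- If `u n = proj_{C n}(f)` converges weakly to `u0` and there exist `z n ∈ C n` with
`‖z n − u0‖ → 0`, then `u n` converges strongly to `u0`. -/
theorem proj_strong_convergence_of_weak_and_recovery
    {H : Type*} [NormedAddCommGroup H] [InnerProductSpace ℝ H] [CompleteSpace H]
    (C : ℕ → Set H)
    (hne : ∀ n, (C n).Nonempty) (hcl : ∀ n, IsClosed (C n)) (hcv : ∀ n, Convex ℝ (C n))
    (f : H) (u : ℕ → H)
    (hu : ∀ n, u n ∈ C n) (hproj : ∀ n, ∀ v ∈ C n, 0 ≤ ⟪u n - f, v - u n⟫)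
    (u0 : H)
    (hweak : ∀ φ : H, Tendsto (fun n => ⟪u n, φ⟫) atTop (𝓝 ⟪u0, φ⟫))
    (z : ℕ → H) (hz : ∀ n, z n ∈ C n)
    (hzconv : Tendsto (fun n => ‖z n - u0‖) atTop (𝓝 0)) :
    Tendsto (fun n => ‖u n - u0‖) atTop (𝓝 0) := by
  -- ‖u n - f‖ ≤ ‖z n - f‖
  have hle : ∀ n, ‖u n - f‖ ≤ ‖z n - f‖ := by
    intro n
    have h1 : 0 ≤ ⟪u n - f, z n - u n⟫ := hproj n (z n) (hz n)
    have h2 : z n - f = (u n - f) + (z n - u n) := by abel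
    have h3 : ‖z n - f‖ ^ 2 = ‖u n - f‖ ^ 2 + 2 * ⟪u n - f, z n - u n⟫ + ‖z n - u n‖ ^ 2 := by
      rw [h2]
      rw [← norm_add_sq_real]
    nlinarith [norm_nonneg (z n - u n), norm_nonneg (u n - f), norm_nonneg (z n - f),
      sq_nonneg (‖z n - u n‖)]
  -- key bound
  have hb : ∀ n, ‖u n - u0‖ ^ 2 ≤ ‖z n - f‖ * ‖z n - u0‖ + ⟪f - u0, u n - u0⟫ := by
    intro n
    have h1 : 0 ≤ ⟪u n - f, z n - u n⟫ := hproj n (z n) (hz n)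
    have e1 : ‖u n - u0‖ ^ 2 = ⟪u n - f, u n - u0⟫ + ⟪f - u0, u n - u0⟫ := by
      have : (u n - f) + (f - u0) = u n - u0 := by abel
      rw [← real_inner_self_eq_norm_sq, ← this, inner_add_left]
    have e2 : ⟪u n - f, u n - u0⟫ = ⟪u n - f, u n - z n⟫ + ⟪u n - f, z n - u0⟫ := by
      rw [← inner_add_right]
      congr 1
      abel
    have e3 : ⟪u n - f, u n - z n⟫ ≤ 0 := by
      have : u n - z n = -(z n - u n) := by abel
      rw [this, inner_neg_right]
      linarith
    have e4 : ⟪u n - f, z n - u0⟫ ≤ ‖u n - f‖ * ‖z n - u0‖ :=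
      real_inner_le_norm _ _
    have e5 : ‖u n - f‖ * ‖z n - u0‖ ≤ ‖z n - f‖ * ‖z n - u0‖ :=
      mul_le_mul_of_nonneg_right (hle n) (norm_nonneg _)
    linarith
  -- the RHS tends to 0
  have hzt : Tendsto z atTop (𝓝 u0) := by
    rw [tendsto_iff_norm_sub_tendsto_zero]
    exact hzconv
  have hzf : Tendsto (fun n => ‖z n - f‖) atTop (𝓝 ‖u0 - f‖) :=
    ((continuous_norm.comp (continuous_id.sub continuous_const)).continuousAt).tendsto.comp hzt
  have h1 : Tendsto (fun n => ‖z n - f‖ * ‖z n - u0‖) atTop (𝓝 0) := by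
    have := hzf.mul hzconv
    simpa using this
  have h2 : Tendsto (fun n => ⟪f - u0, u n - u0⟫) atTop (𝓝 0) := by
    have hw := hweak (f - u0)
    have : Tendsto (fun n => ⟪u n, f - u0⟫ - ⟪u0, f - u0⟫) atTop (𝓝 (⟪u0, f - u0⟫ - ⟪u0, f - u0⟫)) :=
      hw.sub tendsto_const_nhds
    simp only [sub_self] at this
    convert this using 2 with n
    rw [real_inner_comm, inner_sub_left]
  have hRHS : Tendsto (fun n => ‖z n - f‖ * ‖z n - u0‖ + ⟪f - u0, u n - u0⟫) atTop (𝓝 0) := by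
    have := h1.add h2
    simpa using this
  have hsq : Tendsto (fun n => ‖u n - u0‖ ^ 2) atTop (𝓝 0) :=
    squeeze_zero (fun n => sq_nonneg _) hb hRHS
  have := (Real.continuous_sqrt.continuousAt (x := 0)).tendsto.comp hsq
  have heq : ((fun x => Real.sqrt x) ∘ fun n => ‖u n - u0‖ ^ 2) = fun n => ‖u n - u0‖ := by
    funext n
    simp [Function.comp, Real.sqrt_sq (norm_nonneg _)]
  simpa [heq, Real.sqrt_eq_zero'] using this
end

section
/- Let N ≥ 1 be an integer, p > 1, α > 0, β > 0, h ≥ 0 real constants, and let a : ℝ × ℝ^N → ℝ^N be a continuous map satisfying, for all s ∈ ℝ and ξ, η ∈ ℝ^N: (i) a(s, ξ)·ξ ≥ α|ξ|^p (coercivity); (ii) |a(s, ξ)| ≤ β(h + |s|^{p−1} + |ξ|^{p−1}) (growth); (iii) (a(s, ξ) − a(s, η))·(ξ − η) > 0 whenever ξ ≠ η (strict monotonicity). Let {s_n} ⊂ ℝ, {ξ_n}, {ζ_n} ⊂ ℝ^N be sequences with s_n → s*, ζ_n → ξ*, and (a(s_n, ξ_n) − a(s_n, ζ_n))·(ξ_n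 − ζ_n) → 0. Then ξ_n → ξ*. -/
open Filter Topology RealInnerProductSpace

/-- Leray–Lions pointwise convergence: if `a` satisfies coercivity, `(p−1)`-growth and
strict monotonicity, `s n → s*`, `ζ n → ξ*`, and
`(a(s n, ξ n) − a(s n, ζ n))·(ξ n − ζ n) → 0`, then `ξ n → ξ*`. -/
theorem leray_lions_pointwise_convergence
    (N : ℕ) (hN : 1 ≤ N) (p α β h : ℝ)
    (hp : 1 < p) (hα : 0 < α) (hβ : 0 < β) (hh : 0 ≤ h)
    (a : ℝ → EuclideanSpace ℝ (Fin N) → EuclideanSpace ℝ (Fin N))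
    (hcont : Continuous (fun q : ℝ × EuclideanSpace ℝ (Fin N) => a q.1 q.2))
    (hcoer : ∀ (s : ℝ) (ξ : EuclideanSpace ℝ (Fin N)), α * ‖ξ‖ ^ p ≤ ⟪a s ξ, ξ⟫)
    (hgrowth : ∀ (s : ℝ) (ξ : EuclideanSpace ℝ (Fin N)),
      ‖a s ξ‖ ≤ β * (h + |s| ^ (p - 1) + ‖ξ‖ ^ (p - 1)))
    (hmono : ∀ (s : ℝ) (ξ η : EuclideanSpace ℝ (Fin N)), ξ ≠ η →
      0 < ⟪a s ξ - a s η, ξ - η⟫)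
    (s : ℕ → ℝ) (ξ ζ : ℕ → EuclideanSpace ℝ (Fin N))
    (sstar : ℝ) (ξstar : EuclideanSpace ℝ (Fin N))
    (hs : Tendsto s atTop (𝓝 sstar))
    (hζ : Tendsto ζ atTop (𝓝 ξstar))
    (hL : Tendsto (fun n => ⟪a (s n) (ξ n) - a (s n) (ζ n), ξ n - ζ n⟫) atTop (𝓝 0)) :
    Tendsto ξ atTop (𝓝 ξstar) := by
  set e : ℕ → ℝ := fun n => ⟪a (s n) (ξ n) - a (s n) (ζ n), ξ n - ζ n⟫ with he
  -- bounds on the data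
  obtain ⟨Ce, hCe⟩ : ∃ C, ∀ n, e n ≤ C := by
    obtain ⟨C, hC⟩ := hL.bddAbove_range
    exact ⟨C, fun n => hC (Set.mem_range_self n)⟩
  obtain ⟨Cs, hCs⟩ : ∃ C, ∀ n, |s n| ≤ C := by
    obtain ⟨C, hC⟩ := (hs.abs).bddAbove_range
    exact ⟨C, fun n => hC (Set.mem_range_self n)⟩
  obtain ⟨Cζ, hCζ⟩ : ∃ C, ∀ n, ‖ζ n‖ ≤ C := by
    obtain ⟨C, hC⟩ := (hζ.norm).bddAbove_range
    exact ⟨C, fun n => hC (Set.mem_range_self n)⟩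
  have hCs0 : 0 ≤ Cs := le_trans (abs_nonneg _) (hCs 0)
  have hCζ0 : 0 ≤ Cζ := le_trans (norm_nonneg _) (hCζ 0)
  set A : ℝ := β * (h + Cs ^ (p - 1) + Cζ ^ (p - 1)) with hAdef
  set E : ℝ := β * Cζ with hEdef
  set D : ℝ := max Ce 0 + β * (h + Cs ^ (p - 1)) * Cζ + A * Cζ with hDdef
  have hp1 : (0:ℝ) ≤ p - 1 := by linarith
  have hCsp : (0:ℝ) ≤ Cs ^ (p - 1) := Real.rpow_nonneg hCs0 _
  have hCζp : (0:ℝ) ≤ Cζ ^ (p - 1) := Real.rpow_nonneg hCζ0 _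
  have hA0 : 0 ≤ A := by positivity
  have hE0 : 0 ≤ E := by positivity
  have hD0 : 0 ≤ D := by positivity
  -- key inequality
  have key : ∀ n, α * ‖ξ n‖ ^ p ≤ D + E * ‖ξ n‖ ^ (p - 1) + A * ‖ξ n‖ := by
    intro n
    have h1 : ⟪a (s n) (ξ n), ξ n⟫ =
        e n + ⟪a (s n) (ξ n), ζ n⟫ + ⟪a (s n) (ζ n), ξ n - ζ n⟫ := by
      simp [he, inner_sub_left, inner_sub_right]; ring
    have h2 : ⟪a (s n) (ξ n), ζ n⟫ ≤ ‖a (s n) (ξ n)‖ * ‖ζ n‖ := real_inner_le_norm _ _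
    have h3 : ⟪a (s n) (ζ n), ξ n - ζ n⟫ ≤ ‖a (s n) (ζ n)‖ * ‖ξ n - ζ n‖ :=
      real_inner_le_norm _ _
    have hsn : |s n| ^ (p - 1) ≤ Cs ^ (p - 1) :=
      Real.rpow_le_rpow (abs_nonneg _) (hCs n) hp1
    have hζn : ‖ζ n‖ ^ (p - 1) ≤ Cζ ^ (p - 1) :=
      Real.rpow_le_rpow (norm_nonneg _) (hCζ n) hp1
    have hgξ : ‖a (s n) (ξ n)‖ ≤ β * (h + Cs ^ (p - 1) + ‖ξ n‖ ^ (p - 1)) := by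
      refine (hgrowth (s n) (ξ n)).trans ?_
      have : h + |s n| ^ (p - 1) + ‖ξ n‖ ^ (p - 1) ≤
          h + Cs ^ (p - 1) + ‖ξ n‖ ^ (p - 1) := by linarith
      exact mul_le_mul_of_nonneg_left this hβ.le
    have hgζ : ‖a (s n) (ζ n)‖ ≤ A := by
      refine (hgrowth (s n) (ζ n)).trans ?_
      rw [hAdef]
      exact mul_le_mul_of_nonneg_left (by linarith) hβ.le
    have hnξζ : ‖ξ n - ζ n‖ ≤ ‖ξ n‖ + Cζ :=
      (norm_sub_le _ _).trans (by linarith [hCζ n])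
    have h2' : ⟪a (s n) (ξ n), ζ n⟫ ≤ β * (h + Cs ^ (p - 1) + ‖ξ n‖ ^ (p - 1)) * Cζ := by
      refine h2.trans ?_
      have := mul_le_mul hgξ (hCζ n) (norm_nonneg _) (by positivity)
      linarith
    have h3' : ⟪a (s n) (ζ n), ξ n - ζ n⟫ ≤ A * (‖ξ n‖ + Cζ) := by
      refine h3.trans ?_
      exact mul_le_mul hgζ hnξζ (norm_nonneg _) hA0
    have hco := hcoer (s n) (ξ n)
    have hen : e n ≤ max Ce 0 := (hCe n).trans (le_max_left _ _)
    have hξp : (0:ℝ) ≤ ‖ξ n‖ ^ (p - 1) := Real.rpow_nonneg (norm_nonneg _) _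
    have ex1 : β * (h + Cs ^ (p - 1) + ‖ξ n‖ ^ (p - 1)) * Cζ =
        β * (h + Cs ^ (p - 1)) * Cζ + E * ‖ξ n‖ ^ (p - 1) := by rw [hEdef]; ring
    have ex2 : A * (‖ξ n‖ + Cζ) = A * ‖ξ n‖ + A * Cζ := by ring
    rw [hDdef]
    linarith [h1, h2', h3', hco, hen, ex1, ex2]
  -- a uniform bound on ‖ξ n‖
  set m : ℝ := max 1 (p - 1) with hmdef
  have hm1 : (1:ℝ) ≤ m := le_max_left _ _
  have hmp : m < p := max_lt (by linarith) (by linarith)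
  have hpm : 0 < p - m := by linarith
  set K : ℝ := (D + E + A) / α with hKdef
  set R : ℝ := max 1 (K ^ (1 / (p - m))) with hRdef
  have hbound : ∀ n, ‖ξ n‖ ≤ R := by
    intro n
    set t : ℝ := ‖ξ n‖ with htdef
    rcases le_or_gt t 1 with h1 | h1
    · exact h1.trans (le_max_left _ _)
    · have ht0 : (0:ℝ) < t := by linarith
      have ht1 : (1:ℝ) ≤ t := h1.le
      have e1 : t ^ (p - 1) ≤ t ^ m :=
        Real.rpow_le_rpow_of_exponent_le ht1 (le_max_right _ _)
      have e2 : t ≤ t ^ m := by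
        calc t = t ^ (1:ℝ) := (Real.rpow_one t).symm
        _ ≤ t ^ m := Real.rpow_le_rpow_of_exponent_le ht1 hm1
      have e3 : (1:ℝ) ≤ t ^ m := by
        calc (1:ℝ) = 1 ^ m := (Real.one_rpow m).symm
        _ ≤ t ^ m := Real.rpow_le_rpow (by norm_num) ht1 (by linarith)
      have e4 : α * t ^ p ≤ (D + E + A) * t ^ m := by
        have b1 : E * t ^ (p - 1) ≤ E * t ^ m := mul_le_mul_of_nonneg_left e1 hE0
        have b2 : A * t ≤ A * t ^ m := mul_le_mul_of_nonneg_left e2 hA0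
        have b3 : D * 1 ≤ D * t ^ m := mul_le_mul_of_nonneg_left e3 hD0
        linarith [key n]
      have htm0 : (0:ℝ) < t ^ m := by linarith
      have e5 : t ^ (p - m) ≤ K := by
        rw [Real.rpow_sub ht0, hKdef, div_le_div_iff₀ htm0 hα]
        linarith [e4]
      have e6 : t ≤ K ^ (1 / (p - m)) := by
        have hstep := Real.rpow_le_rpow (Real.rpow_nonneg ht0.le _) e5
          (by positivity : (0:ℝ) ≤ 1 / (p - m))
        rwa [← Real.rpow_mul ht0.le, mul_one_div, div_self hpm.ne', Real.rpow_one] at hstep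
      exact e6.trans (le_max_right _ _)
  -- subsequence argument
  apply tendsto_of_subseq_tendsto
  intro ns hns
  have hmem : ∀ k, ξ (ns k) ∈ Metric.closedBall (0 : EuclideanSpace ℝ (Fin N)) R := by
    intro k
    simpa [Metric.mem_closedBall, dist_zero_right] using hbound (ns k)
  obtain ⟨ξ', _, φ, hφ, hconv⟩ :=
    (isCompact_closedBall (0 : EuclideanSpace ℝ (Fin N)) R).tendsto_subseq hmem
  refine ⟨φ, ?_⟩
  have hmtop : Tendsto (fun k => ns (φ k)) atTop atTop := hns.comp hφ.tendsto_atTop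
  have hsc : Tendsto (fun k => s (ns (φ k))) atTop (𝓝 sstar) := hs.comp hmtop
  have hζc : Tendsto (fun k => ζ (ns (φ k))) atTop (𝓝 ξstar) := hζ.comp hmtop
  have hξc : Tendsto (fun k => ξ (ns (φ k))) atTop (𝓝 ξ') := hconv
  have hec : Tendsto (fun k => e (ns (φ k))) atTop (𝓝 0) := hL.comp hmtop
  have haξ : Tendsto (fun k => a (s (ns (φ k))) (ξ (ns (φ k)))) atTop (𝓝 (a sstar ξ')) :=
    (hcont.tendsto (sstar, ξ')).comp (hsc.prodMk_nhds hξc)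
  have haζ : Tendsto (fun k => a (s (ns (φ k))) (ζ (ns (φ k)))) atTop (𝓝 (a sstar ξstar)) :=
    (hcont.tendsto (sstar, ξstar)).comp (hsc.prodMk_nhds hζc)
  have hL' : Tendsto (fun k => e (ns (φ k))) atTop
      (𝓝 ⟪a sstar ξ' - a sstar ξstar, ξ' - ξstar⟫) :=
    (haξ.sub haζ).inner (hξc.sub hζc)
  have hzero : ⟪a sstar ξ' - a sstar ξstar, ξ' - ξstar⟫ = (0:ℝ) :=
    tendsto_nhds_unique hL' hec
  have hξξ : ξ' = ξstar := by
    by_contra hne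
    exact (hmono sstar ξ' ξstar hne).ne' hzero
  rw [hξξ] at hξc
  exact hξc
end

section
/- Let N ≥ 1 be an integer, p > 1, α > 0, β > 0, h ≥ 0 real constants, and let a : ℝ × ℝ^N → ℝ^N satisfy, for all s ∈ ℝ and ξ ∈ ℝ^N: a(s, ξ)·ξ ≥ α|ξ|^p and |a(s, ξ)| ≤ β(h + |s|^{p−1} + |ξ|^{p−1}). Let {s_n} ⊂ ℝ be a bounded sequence, {ζ_n} ⊂ ℝ^N a bounded sequence, and {ξ_n} ⊂ ℝ^N a sequence such that the quantities L_n := (a(s_n, ξ_n) − a(s_n, ζ_n))·(ξ_n − ζ_n) are bounded above. Then the sequence {ξ_n} is bounded in ℝ^N. -/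
open Filter Topology RealInnerProductSpace

lemma leray_aux (p α A B D : ℝ) (hp : 1 < p) (hα : 0 < α) (hA : 0 ≤ A) (hB : 0 ≤ B)
    (hD : 0 ≤ D) :
    ∃ M : ℝ, ∀ t : ℝ, 0 ≤ t → α * t ^ p ≤ A + B * t + D * t ^ (p - 1) → t ≤ M := by
  set R := 2 * (A + B) / α with hR
  refine ⟨max (max 1 (2 * D / α + 1)) (R ^ (1 / (p - 1))), fun t ht hineq => ?_⟩
  by_cases hT : t ≤ max 1 (2 * D / α + 1)
  · exact hT.trans (le_max_left _ _)
  push_neg at hT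
  have h1 : 1 < t := lt_of_le_of_lt (le_max_left _ _) hT
  have ht0 : (0:ℝ) < t := by linarith
  have hDt : 2 * D / α < t :=
    lt_of_lt_of_le (by linarith [le_max_right 1 (2 * D / α + 1)]) hT.le
  have hp1 : (0:ℝ) < p - 1 := by linarith
  have hsplit : t ^ p = t * t ^ (p - 1) := by
    have := Real.rpow_add ht0 1 (p - 1)
    simpa [Real.rpow_one, show 1 + (p - 1) = p by ring] using this
  have htp1 : (0:ℝ) ≤ t ^ (p - 1) := Real.rpow_nonneg ht _
  have h2D : 2 * D < t * α := (div_lt_iff₀ hα).mp hDt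
  have hDle : D * t ^ (p - 1) ≤ α / 2 * t ^ p := by
    rw [hsplit]
    nlinarith [mul_le_mul_of_nonneg_right (by linarith : D ≤ α / 2 * t) htp1]
  have hAt : A ≤ A * t := by nlinarith
  have hkey : α / 2 * t ^ p ≤ (A + B) * t := by nlinarith
  have htp : t ^ p ≤ R * t := by
    rw [hR, div_mul_eq_mul_div, le_div_iff₀ hα]
    nlinarith
  have htpm1 : t ^ (p - 1) ≤ R := by
    have : t * t ^ (p - 1) ≤ R * t := hsplit ▸ htp
    nlinarith
  have : (t ^ (p - 1)) ^ (1 / (p - 1)) ≤ R ^ (1 / (p - 1)) :=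
    Real.rpow_le_rpow htp1 htpm1 (by positivity)
  calc t = (t ^ (p - 1)) ^ (1 / (p - 1)) := by
            rw [← Real.rpow_mul ht, mul_one_div, div_self hp1.ne', Real.rpow_one]
    _ ≤ R ^ (1 / (p - 1)) := this
    _ ≤ _ := le_max_right _ _

/-- If `a` satisfies coercivity and `(p−1)`-growth, `{s n}` and `{ζ n}` are bounded, and
the quantities `L n = (a(s n, ξ n) − a(s n, ζ n))·(ξ n − ζ n)` are bounded above, then
the sequence `{ξ n}` is bounded. -/
theorem leray_lions_pointwise_bounded
    (N : ℕ) (hN : 1 ≤ N) (p α β h : ℝ)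
    (hp : 1 < p) (hα : 0 < α) (hβ : 0 < β) (hh : 0 ≤ h)
    (a : ℝ → EuclideanSpace ℝ (Fin N) → EuclideanSpace ℝ (Fin N))
    (hcoer : ∀ (s : ℝ) (ξ : EuclideanSpace ℝ (Fin N)), α * ‖ξ‖ ^ p ≤ ⟪a s ξ, ξ⟫)
    (hgrowth : ∀ (s : ℝ) (ξ : EuclideanSpace ℝ (Fin N)),
      ‖a s ξ‖ ≤ β * (h + |s| ^ (p - 1) + ‖ξ‖ ^ (p - 1)))
    (s : ℕ → ℝ) (ξ ζ : ℕ → EuclideanSpace ℝ (Fin N))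
    (hsbd : ∃ M₁ : ℝ, ∀ n, |s n| ≤ M₁)
    (hζbd : ∃ M₂ : ℝ, ∀ n, ‖ζ n‖ ≤ M₂)
    (hLbd : ∃ K : ℝ, ∀ n, ⟪a (s n) (ξ n) - a (s n) (ζ n), ξ n - ζ n⟫ ≤ K) :
    ∃ M : ℝ, ∀ n, ‖ξ n‖ ≤ M := by
  obtain ⟨M₁, hM₁⟩ := hsbd
  obtain ⟨M₂, hM₂⟩ := hζbd
  obtain ⟨K, hK⟩ := hLbd
  have hp1 : (0:ℝ) ≤ p - 1 := by linarith
  set m₁ : ℝ := max M₁ 0 with hm₁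
  set m₂ : ℝ := max M₂ 0 with hm₂
  have hm₁0 : 0 ≤ m₁ := le_max_right _ _
  have hm₂0 : 0 ≤ m₂ := le_max_right _ _
  set C' : ℝ := β * (h + m₁ ^ (p - 1)) with hC'
  set C : ℝ := β * (h + m₁ ^ (p - 1) + m₂ ^ (p - 1)) with hC
  have hC'0 : 0 ≤ C' := by positivity
  have hC0 : 0 ≤ C := by positivity
  set A : ℝ := max K 0 + C' * m₂ + β * m₂ ^ (p - 1) * m₂ with hA
  have hA0 : 0 ≤ A := by positivity
  obtain ⟨M, hM⟩ := leray_aux p α A C (β * m₂) hp hα hA0 hC0 (by positivity)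
  refine ⟨M, fun n => ?_⟩
  set t : ℝ := ‖ξ n‖ with htdef
  have ht : 0 ≤ t := norm_nonneg _
  apply hM t ht
  -- bounds on s n and ζ n powers
  have hs : |s n| ^ (p - 1) ≤ m₁ ^ (p - 1) :=
    Real.rpow_le_rpow (abs_nonneg _) (le_max_of_le_left (hM₁ n)) hp1
  have hz : ‖ζ n‖ ≤ m₂ := le_max_of_le_left (hM₂ n)
  have hzp : ‖ζ n‖ ^ (p - 1) ≤ m₂ ^ (p - 1) :=
    Real.rpow_le_rpow (norm_nonneg _) hz hp1
  have hgξ : ‖a (s n) (ξ n)‖ ≤ C' + β * t ^ (p - 1) := by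
    have := hgrowth (s n) (ξ n)
    rw [hC']
    nlinarith
  have hgζ : ‖a (s n) (ζ n)‖ ≤ C := by
    have := hgrowth (s n) (ζ n)
    rw [hC]
    nlinarith
  have htp1 : (0:ℝ) ≤ t ^ (p - 1) := Real.rpow_nonneg ht _
  have e1 : ⟪a (s n) (ξ n), ζ n⟫ ≤ (C' + β * t ^ (p - 1)) * m₂ :=
    (real_inner_le_norm _ _).trans
      (mul_le_mul hgξ hz (norm_nonneg _) (by positivity))
  have e2 : ⟪a (s n) (ζ n), ξ n⟫ ≤ C * t :=
    (real_inner_le_norm _ _).trans (mul_le_mul hgζ le_rfl ht hC0)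
  have e3 : 0 ≤ ⟪a (s n) (ζ n), ζ n⟫ :=
    le_trans (by positivity) (hcoer (s n) (ζ n))
  have expand : ⟪a (s n) (ξ n) - a (s n) (ζ n), ξ n - ζ n⟫ =
      ⟪a (s n) (ξ n), ξ n⟫ - ⟪a (s n) (ξ n), ζ n⟫ -
        ⟪a (s n) (ζ n), ξ n⟫ + ⟪a (s n) (ζ n), ζ n⟫ := by
    simp [inner_sub_left, inner_sub_right]; ring
  have hKn := hK n
  rw [expand] at hKn
  have hcoξ : α * t ^ p ≤ ⟪a (s n) (ξ n), ξ n⟫ := hcoer (s n) (ξ n)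
  have hKmax : K ≤ max K 0 := le_max_left _ _
  have hpos : 0 ≤ β * m₂ ^ (p - 1) * m₂ := by positivity
  rw [hA]
  nlinarith
end
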